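/- Let 𝔄 be a τ-structure, X ⊆ A, φ ∈ MSO(τ), and 𝒢 = EMC(𝔄, X, φ). Then eval(𝒢) = ⊤ if and only if reduce(𝒢) = ⊤, and eval(𝒢) = ⊥ if and only if reduce(𝒢) = ⊥. -/
import Mathlib


namespace MSOG

attribute [local instance] Classical.propDecidable

/-! ### Players and vocabularies -/

inductive Player where
  | falsifier
  | verifier
deriving DecidableEq

/-- A vocabulary: a finite set of relation symbol names and nullary symbol names.
Symbols are drawn from `ℕ`; the arity of relation symbols is given by a global
arity function `ar : ℕ → ℕ`. -/
structure Vocab where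
  rels : Finset ℕ
  nulls : Finset ℕ

def Vocab.addRel (τ : Vocab) (R : ℕ) : Vocab := ⟨insert R τ.rels, τ.nulls⟩

def Vocab.addNul (τ : Vocab) (c : ℕ) : Vocab := ⟨τ.rels, insert c τ.nulls⟩

/-! ### Structures -/

/-- A (partially interpreted) structure: a finite universe of objects (⊆ ℕ),
an interpretation of each relation symbol as a set of tuples (lists), and a
partial interpretation of nullary symbols (`none` = nil/uninterpreted). -/
structure Struc where
  voc : Vocab
  univ : Finset ℕ
  rel : ℕ → List ℕ → Prop
  nul : ℕ → Option ℕ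

/-- Wellformedness of a structure w.r.t. the arity function: relations only
interpret relation symbols of the vocabulary by tuples of the right length over
the universe, and nullary symbols of the vocabulary by universe elements. -/
structure Struc.WF (ar : ℕ → ℕ) (A : Struc) : Prop where
  rel_wf : ∀ R t, A.rel R t → R ∈ A.voc.rels ∧ t.length = ar R ∧ ∀ x ∈ t, x ∈ A.univ
  nul_wf : ∀ c x, A.nul c = some x → c ∈ A.voc.nulls ∧ x ∈ A.univ

def Struc.FullyInterpreted (A : Struc) : Prop := ∀ c ∈ A.voc.nulls, (A.nul c).isSome

/-- The set `c̄^𝔄` of values of the interpreted nullary symbols. -/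
def Struc.nulValues (A : Struc) : Finset ℕ :=
  A.voc.nulls.biUnion fun c => (A.nul c).toFinset

/-- Induced substructure `𝔄[s]`. -/
def Struc.restrict (A : Struc) (s : Finset ℕ) : Struc where
  voc := A.voc
  univ := A.univ ∩ s
  rel := fun R t => A.rel R t ∧ ∀ x ∈ t, x ∈ s
  nul := fun c =>
    match A.nul c with
    | some x => if x ∈ s then some x else none
    | none => none

/-- Expansion `(𝔄, u)` interpreting the nullary symbol `c` as `u` (possibly nil). -/
def Struc.addNul (A : Struc) (c : ℕ) (u : Option ℕ) : Struc where
  voc := A.voc.addNul c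
  univ := A.univ
  rel := A.rel
  nul := fun d => if d = c then u else A.nul d

/-- Expansion `(𝔄, U)` interpreting the unary relation symbol `R` as `U ⊆ A`. -/
def Struc.addRel (A : Struc) (R : ℕ) (U : Finset ℕ) : Struc where
  voc := A.voc.addRel R
  univ := A.univ
  rel := fun S t => if S = R then ∃ x ∈ U, t = [x] else A.rel S t
  nul := A.nul

/-- Expansion `(𝔄, U₁, …, U_l)` interpreting each unary relation symbol `R ∈ Rs`
as `U R ⊆ A`. -/
def Struc.addRels (A : Struc) (Rs : Finset ℕ) (U : ℕ → Finset ℕ) : Struc where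
  voc := ⟨A.voc.rels ∪ Rs, A.voc.nulls⟩
  univ := A.univ
  rel := fun S t => if S ∈ Rs then ∃ x ∈ U S, t = [x] else A.rel S t
  nul := A.nul

/-- `h` is an isomorphism from `A` to `B`. -/
structure Iso (A B : Struc) (h : ℕ → ℕ) : Prop where
  voc_eq : A.voc = B.voc
  bij : Set.BijOn h ↑A.univ ↑B.univ
  interp_iff : ∀ c ∈ A.voc.nulls, ((A.nul c).isSome ↔ (B.nul c).isSome)
  nul_map : ∀ c ∈ A.voc.nulls, ∀ x, A.nul c = some x → B.nul c = some (h x)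
  rel_map : ∀ R ∈ A.voc.rels, ∀ t : List ℕ, (∀ x ∈ t, x ∈ A.univ) →
    (A.rel R t ↔ B.rel R (t.map h))

/-- Two structures are compatible: interpreted nullary symbols agree, and the
identity is an isomorphism between the substructures induced by the common part
of the universes. -/
def Compatible (A B : Struc) : Prop :=
  A.voc = B.voc ∧
  (∀ c x y, A.nul c = some x → B.nul c = some y → x = y) ∧
  Iso (A.restrict (A.univ ∩ B.univ)) (B.restrict (A.univ ∩ B.univ)) id

/-- Union of two (compatible) structures. -/
def Struc.union (A B : Struc) : Struc where
  voc := A.voc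
  univ := A.univ ∪ B.univ
  rel := fun R t => A.rel R t ∨ B.rel R t
  nul := fun c =>
    match A.nul c with
    | some x => some x
    | none => B.nul c

/-! ### MSO formulas -/

/-- MSO formulas in negation normal form. -/
inductive MSO where
  | atom (R : ℕ) (cs : List ℕ)
  | natom (R : ℕ) (cs : List ℕ)
  | conj (φ ψ : MSO)
  | disj (φ ψ : MSO)
  | fall (c : ℕ) (φ : MSO)
  | fex (c : ℕ) (φ : MSO)
  | sall (R : ℕ) (φ : MSO)
  | sex (R : ℕ) (φ : MSO)
deriving DecidableEq

/-- `MSO.wf ar τ φ` means `φ ∈ MSO(τ)` (w.r.t. the arity function `ar`,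
quantified symbols being fresh unary relation resp. nullary symbols). -/
def MSO.wf (ar : ℕ → ℕ) : Vocab → MSO → Prop
  | τ, .atom R cs => R ∈ τ.rels ∧ cs.length = ar R ∧ ∀ c ∈ cs, c ∈ τ.nulls
  | τ, .natom R cs => R ∈ τ.rels ∧ cs.length = ar R ∧ ∀ c ∈ cs, c ∈ τ.nulls
  | τ, .conj φ ψ => MSO.wf ar τ φ ∧ MSO.wf ar τ ψ
  | τ, .disj φ ψ => MSO.wf ar τ φ ∧ MSO.wf ar τ ψ
  | τ, .fall c φ => c ∉ τ.nulls ∧ MSO.wf ar (τ.addNul c) φ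
  | τ, .fex c φ => c ∉ τ.nulls ∧ MSO.wf ar (τ.addNul c) φ
  | τ, .sall R φ => R ∉ τ.rels ∧ ar R = 1 ∧ MSO.wf ar (τ.addRel R) φ
  | τ, .sex R φ => R ∉ τ.rels ∧ ar R = 1 ∧ MSO.wf ar (τ.addRel R) φ

/-- Quantifier rank. -/
def MSO.qr : MSO → ℕ
  | .atom _ _ => 0
  | .natom _ _ => 0
  | .conj φ ψ => max φ.qr ψ.qr
  | .disj φ ψ => max φ.qr ψ.qr
  | .fall _ φ => φ.qr + 1
  | .fex _ φ => φ.qr + 1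
  | .sall _ φ => φ.qr + 1
  | .sex _ φ => φ.qr + 1

/-- Length `‖φ‖` of (an encoding of) the formula. -/
def MSO.len : MSO → ℕ
  | .atom _ cs => 1 + cs.length
  | .natom _ cs => 1 + cs.length
  | .conj φ ψ => 1 + φ.len + ψ.len
  | .disj φ ψ => 1 + φ.len + ψ.len
  | .fall _ φ => 1 + φ.len
  | .fex _ φ => 1 + φ.len
  | .sall _ φ => 1 + φ.len
  | .sex _ φ => 1 + φ.len

def MSO.IsAtomic : MSO → Prop
  | .atom _ _ | .natom _ _ => True
  | _ => False

def MSO.IsUniversal : MSO → Prop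
  | .conj _ _ | .fall _ _ | .sall _ _ => True
  | _ => False

def MSO.IsExistential : MSO → Prop
  | .disj _ _ | .fex _ _ | .sex _ _ => True
  | _ => False

/-- Classical (Tarskian) satisfaction `𝔄 ⊨ φ`. -/
def Sat : Struc → MSO → Prop
  | A, .atom R cs => ∃ t, cs.mapM A.nul = some t ∧ A.rel R t
  | A, .natom R cs => ∃ t, cs.mapM A.nul = some t ∧ ¬ A.rel R t
  | A, .conj φ ψ => Sat A φ ∧ Sat A ψ
  | A, .disj φ ψ => Sat A φ ∨ Sat A ψ
  | A, .fall c φ => ∀ a ∈ A.univ, Sat (A.addNul c (some a)) φ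
  | A, .fex c φ => ∃ a ∈ A.univ, Sat (A.addNul c (some a)) φ
  | A, .sall R φ => ∀ U ⊆ A.univ, Sat (A.addRel R U) φ
  | A, .sex R φ => ∃ U ⊆ A.univ, Sat (A.addRel R U) φ

/-! ### Games -/

/-- A game, presented as its unfolding: either one of the two fixed games
`⊤` (the verifier has a winning strategy) or `⊥` (the falsifier has a winning
strategy), or an initial position together with the player (if any) this
position is assigned to and the list of subgames reachable by the moves. -/
inductive Game (P : Type) where
  | top
  | bot
  | node (pos : P) (owner : Option Player) (subs : List (Game P))

theorem Game.sizeOf_lt_node {P : Type} [SizeOf P] {p : P} {o : Option Player}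
    {s : List (Game P)} {g : Game P} (h : g ∈ s) :
    sizeOf g < sizeOf (Game.node p o s) := by
  have := List.sizeOf_lt_of_mem h
  simp only [Game.node.sizeOf_spec]
  omega

/-- The evaluation algorithm: returns `⊤` if the verifier has a winning
strategy, `⊥` if the falsifier has one, and otherwise the unfolded game
recording the drawn plays. -/
noncomputable def Game.eval {P : Type} : Game P → Game P
  | .top => .top
  | .bot => .bot
  | .node p o subs =>
    let es := subs.attach.map fun g => Game.eval g.1
    match o with
    | some .falsifier =>
      if ∀ g ∈ es, g = Game.top then Game.top
      else if Game.bot ∈ es then Game.bot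
      else Game.node p o es
    | some .verifier =>
      if ∀ g ∈ es, g = Game.bot then Game.bot
      else if Game.top ∈ es then Game.top
      else Game.node p o es
    | none => Game.node p o es
termination_by g => sizeOf g
decreasing_by
  exact Game.sizeOf_lt_node g.2

/-- Equivalence of games, relative to an equivalence `pe` on positions:
the initial positions are equivalent (with equal assignment to players) and
there is a bijection `e` between the sets of subgames such that each subgame is
equivalent to its image. -/
def GEquiv {P : Type} (pe : P → P → Prop) : Game P → Game P → Prop
  | .top, .top => True
  | .bot, .bot => True
  | .node p o s, .node q o' t =>
    pe p q ∧ o = o' ∧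
    ∃ e : {g // g ∈ s} ≃ {g // g ∈ t}, ∀ g : {g // g ∈ s}, GEquiv pe g.1 (e g).1
  | _, _ => False
termination_by g _ => sizeOf g
decreasing_by
  exact Game.sizeOf_lt_node g.2

/-- Number of positions of a game. -/
def Game.size {P : Type} : Game P → ℕ
  | .top => 1
  | .bot => 1
  | .node _ _ subs => 1 + (subs.attach.map fun g => Game.size g.1).sum
termination_by g => sizeOf g
decreasing_by
  exact Game.sizeOf_lt_node g.2

/-! ### Model checking games -/

/-- Positions of extended model checking games: a structure, the current set
`X`, and a formula. -/
abbrev EPos : Type := Struc × Finset ℕ × MSO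

/-- Positions of classical model checking games. -/
abbrev CPos : Type := Struc × MSO

/-- Equivalence of positions: same `X ⊆ H₁ ∩ H₂`, same formula, and an
isomorphism between the structures fixing `X` pointwise. -/
def PosEquivE (p q : EPos) : Prop :=
  p.2.1 = q.2.1 ∧ p.2.2 = q.2.2 ∧
  p.2.1 ⊆ p.1.univ ∧ p.2.1 ⊆ q.1.univ ∧
  ∃ h : ℕ → ℕ, Iso p.1 q.1 h ∧ ∀ a ∈ p.2.1, h a = a

/-- Equivalence `≅` of extended model checking games. -/
def GEquivE : Game EPos → Game EPos → Prop := GEquiv PosEquivE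

/-- The extended model checking game `EMC(𝔄, X, φ)` (argument order:
formula, structure, set). -/
noncomputable def EMC : MSO → Struc → Finset ℕ → Game EPos
  | .atom R cs, A, X =>
    Game.node (A.restrict (X ∪ A.nulValues), X, .atom R cs)
      (if ∀ c ∈ cs, (A.nul c).isSome then
        (if Sat A (.atom R cs) then some .falsifier else some .verifier)
       else none) []
  | .natom R cs, A, X =>
    Game.node (A.restrict (X ∪ A.nulValues), X, .natom R cs)
      (if ∀ c ∈ cs, (A.nul c).isSome then
        (if Sat A (.natom R cs) then some .falsifier else some .verifier)
       else none) []
  | .conj φ ψ, A, X =>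
    Game.node (A.restrict (X ∪ A.nulValues), X, .conj φ ψ) (some .falsifier)
      [EMC φ A X, EMC ψ A X]
  | .disj φ ψ, A, X =>
    Game.node (A.restrict (X ∪ A.nulValues), X, .disj φ ψ) (some .verifier)
      [EMC φ A X, EMC ψ A X]
  | .fall c φ, A, X =>
    Game.node (A.restrict (X ∪ A.nulValues), X, .fall c φ) (some .falsifier)
      ((none :: A.univ.toList.map some).map fun u => EMC φ (A.addNul c u) X)
  | .fex c φ, A, X =>
    Game.node (A.restrict (X ∪ A.nulValues), X, .fex c φ) (some .verifier)
      ((none :: A.univ.toList.map some).map fun u => EMC φ (A.addNul c u) X)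
  | .sall R φ, A, X =>
    Game.node (A.restrict (X ∪ A.nulValues), X, .sall R φ) (some .falsifier)
      (A.univ.powerset.toList.map fun U => EMC φ (A.addRel R U) X)
  | .sex R φ, A, X =>
    Game.node (A.restrict (X ∪ A.nulValues), X, .sex R φ) (some .verifier)
      (A.univ.powerset.toList.map fun U => EMC φ (A.addRel R U) X)

/-- The classical model checking game `MC(𝔄, φ)` (argument order:
formula, structure); object quantifiers move only to elements of the universe
(no nil moves). -/
noncomputable def MC : MSO → Struc → Game CPos
  | .atom R cs, A =>
    Game.node (A.restrict A.nulValues, .atom R cs)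
      (if Sat A (.atom R cs) then some .falsifier else some .verifier) []
  | .natom R cs, A =>
    Game.node (A.restrict A.nulValues, .natom R cs)
      (if Sat A (.natom R cs) then some .falsifier else some .verifier) []
  | .conj φ ψ, A =>
    Game.node (A.restrict A.nulValues, .conj φ ψ) (some .falsifier)
      [MC φ A, MC ψ A]
  | .disj φ ψ, A =>
    Game.node (A.restrict A.nulValues, .disj φ ψ) (some .verifier)
      [MC φ A, MC ψ A]
  | .fall c φ, A =>
    Game.node (A.restrict A.nulValues, .fall c φ) (some .falsifier)
      (A.univ.toList.map fun a => MC φ (A.addNul c (some a)))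
  | .fex c φ, A =>
    Game.node (A.restrict A.nulValues, .fex c φ) (some .verifier)
      (A.univ.toList.map fun a => MC φ (A.addNul c (some a)))
  | .sall R φ, A =>
    Game.node (A.restrict A.nulValues, .sall R φ) (some .falsifier)
      (A.univ.powerset.toList.map fun U => MC φ (A.addRel R U))
  | .sex R φ, A =>
    Game.node (A.restrict A.nulValues, .sex R φ) (some .verifier)
      (A.univ.powerset.toList.map fun U => MC φ (A.addRel R U))

/-! ### The algorithms reduce, convert, forget, combine -/

/-- Remove subgames that are equivalent (`≅`) to an already kept one. -/
noncomputable def dedupEquiv : List (Game EPos) → List (Game EPos)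
  | [] => []
  | g :: gs =>
    let r := dedupEquiv gs
    if ∃ g' ∈ r, GEquivE g g' then r else g :: r

/-- The algorithm `reduce`. -/
noncomputable def reduce : Game EPos → Game EPos
  | .top => .top
  | .bot => .bot
  | .node p o subs =>
    if p.2.2.IsAtomic then Game.eval (Game.node p o subs)
    else
      let rs := subs.attach.map fun g => reduce g.1
      if p.2.2.IsUniversal ∧ Game.bot ∈ rs then Game.bot
      else if p.2.2.IsExistential ∧ Game.top ∈ rs then Game.top
      else
        let kept := dedupEquiv (rs.filter fun g => decide (g ≠ Game.top ∧ g ≠ Game.bot))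
        if kept = [] then Game.eval (Game.node p o ([] : List (Game EPos)))
        else Game.node p o kept
termination_by g => sizeOf g
decreasing_by
  exact Game.sizeOf_lt_node g.2

/-- Whether a game is a node whose position's structure is fully interpreted. -/
def Game.IsFullNodeE : Game EPos → Prop
  | .node q _ _ => q.1.FullyInterpreted
  | _ => False

/-- The algorithm `convert`, turning an extended model checking game into a
classical model checking game by keeping exactly the subgames whose position's
structure is fully interpreted. -/
noncomputable def convert : Game EPos → Game CPos
  | .top => .top
  | .bot => .bot
  | .node p o subs =>
    Game.node (p.1.restrict p.1.nulValues, p.2.2) o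
      (subs.attach.filterMap fun g =>
        if g.1.IsFullNodeE then some (convert g.1) else none)
termination_by g => sizeOf g
decreasing_by
  exact Game.sizeOf_lt_node g.2

/-- The algorithm `forget(𝒢, x)`. -/
noncomputable def forget : Game EPos → ℕ → Game EPos
  | .top, _ => .top
  | .bot, _ => .bot
  | .node p o subs, x =>
    let H := p.1
    let p' : EPos :=
      if ∃ c ∈ H.voc.nulls, H.nul c = some x then (H, p.2.1.erase x, p.2.2)
      else (H.restrict (H.univ.erase x), p.2.1.erase x, p.2.2)
    reduce (Game.node p' o (subs.attach.map fun g => forget g.1 x))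
termination_by g _ => sizeOf g
decreasing_by
  exact Game.sizeOf_lt_node g.2

/-- A pair of subgames that `combine` recurses on: both are nodes with the same
principal subformula and compatible structures. -/
def PairOk : Game EPos → Game EPos → Prop
  | .node p _ _, .node q _ _ => p.2.2 = q.2.2 ∧ Compatible p.1 q.1
  | _, _ => False

/-- The algorithm `combine(𝒢₁, 𝒢₂)`. -/
noncomputable def combine : Game EPos → Game EPos → Game EPos
  | .node p1 o1 s1, .node p2 _ s2 =>
    reduce (Game.node (p1.1.union p2.1, p1.2.1 ∪ p2.2.1, p1.2.2) o1
      ((s1.attach.flatMap fun g1 => s2.attach.map fun g2 => (g1, g2)).filterMap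
        fun gg => if PairOk gg.1.1 gg.2.1 then some (combine gg.1.1 gg.2.1) else none))
  | g, _ => g
termination_by g1 g2 => sizeOf g1 + sizeOf g2
decreasing_by
  have h1 := List.sizeOf_lt_of_mem gg.1.2
  have h2 := List.sizeOf_lt_of_mem gg.2.2
  simp only [Game.node.sizeOf_spec]
  omega

/-! ### Iterated exponentials and minima -/

/-- `iterexp t x = exp^t(x)`, the `t`-fold iterated exponential. -/
def iterexp : ℕ → ℕ → ℕ
  | 0, x => x
  | t + 1, x => 2 ^ iterexp t x

/-- `r` is the minimum of the set `V ⊆ ℤ`, in `WithTop ℤ` (with `min ∅ = ⊤`). -/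
def IsMinZ (r : WithTop ℤ) (V : Set ℤ) : Prop :=
  (∀ v ∈ V, r ≤ (v : WithTop ℤ)) ∧ (V = ∅ → r = ⊤) ∧
  (V.Nonempty → ∃ v ∈ V, r = (v : WithTop ℤ))

/-- `r` is the minimum of the set `V ⊆ WithTop ℤ` (with `min ∅ = ⊤`). -/
def IsMinW (r : WithTop ℤ) (V : Set (WithTop ℤ)) : Prop :=
  (∀ v ∈ V, r ≤ v) ∧ (V = ∅ → r = ⊤) ∧ (V.Nonempty → r ∈ V)

/-! ### Tree decompositions -/

/-- Rooted trees with bags at the nodes. -/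
inductive RTree where
  | node (bag : Finset ℕ) (children : List RTree)

theorem RTree.sizeOf_lt_node {b : Finset ℕ} {cs : List RTree} {c : RTree}
    (h : c ∈ cs) : sizeOf c < sizeOf (RTree.node b cs) := by
  have := List.sizeOf_lt_of_mem h
  simp only [RTree.node.sizeOf_spec]
  omega

def RTree.bag : RTree → Finset ℕ
  | .node b _ => b

/-- The subtree at an address (a node of the tree is identified with the list
of child indices leading to it from the root). -/
def RTree.subtreeAt : RTree → List ℕ → Option RTree
  | t, [] => some t
  | .node _ cs, i :: is =>
    match cs[i]? with
    | some c => c.subtreeAt is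
    | none => none

/-- The bag at an address. -/
def RTree.bagAt (t : RTree) (p : List ℕ) : Option (Finset ℕ) :=
  (t.subtreeAt p).map RTree.bag

/-- All objects occurring in bags of the tree (`Aᵢ` for the subtree at `i`). -/
def RTree.allObjs : RTree → Finset ℕ
  | .node b cs => b ∪ (cs.attach.map fun c => RTree.allObjs c.1).foldr (· ∪ ·) ∅
termination_by t => sizeOf t
decreasing_by
  exact RTree.sizeOf_lt_node c.2

/-- The number of nodes `|T|` of the tree. -/
def RTree.count : RTree → ℕ
  | .node _ cs => 1 + (cs.attach.map fun c => RTree.count c.1).sum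
termination_by t => sizeOf t
decreasing_by
  exact RTree.sizeOf_lt_node c.2

/-- Longest common prefix of two addresses. -/
def lcp : List ℕ → List ℕ → List ℕ
  | a :: as, b :: bs => if a = b then a :: lcp as bs else []
  | _, _ => []

/-- `(𝒯, 𝒳)` (coded as a single bag-labelled rooted tree) is a tree
decomposition of the relational structure `A`: bags are subsets of the universe
covering it, every tuple of every relation is contained in some bag, and if `r`
lies on the path between `p` and `q` then `X_p ∩ X_q ⊆ X_r`. -/
structure IsTreeDecomp (A : Struc) (t : RTree) : Prop where
  bags_sub : ∀ p b, t.bagAt p = some b → b ⊆ A.univ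
  covers : ∀ a ∈ A.univ, ∃ p b, t.bagAt p = some b ∧ a ∈ b
  rel_covers : ∀ R tup, A.rel R tup → ∃ p b, t.bagAt p = some b ∧ ∀ x ∈ tup, x ∈ b
  connected : ∀ p q r bp bq br, t.bagAt p = some bp → t.bagAt q = some bq →
    t.bagAt r = some br → lcp p q <+: r → (r <+: p ∨ r <+: q) → bp ∩ bq ⊆ br

/-- The width of the tree decomposition is at most `w`: every bag has at most
`w + 1` elements. -/
def TDWidthLE (t : RTree) (w : ℕ) : Prop :=
  ∀ p b, t.bagAt p = some b → b.card ≤ w + 1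

/-- A node of a nice tree decomposition is a leaf (singleton bag), an introduce
node, a forget node, or a join node. -/
def RTree.NiceStep : RTree → Prop
  | .node b [] => ∃ x, b = {x}
  | .node b [c] =>
      (∃ x, x ∉ c.allObjs ∧ b = insert x c.bag) ∨ (∃ x ∈ c.bag, b = c.bag.erase x)
  | .node b [c₁, c₂] => b = c₁.bag ∧ b = c₂.bag
  | .node _ _ => False

/-- A nice tree decomposition: every node is a leaf, introduce, forget, or join
node. -/
def RTree.Nice (t : RTree) : Prop := ∀ p s, t.subtreeAt p = some s → s.NiceStep

/-! ### The dynamic programming algorithm -/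

/-- `ValidAssign Rbar X U`: `U` is an assignment `(U₁, …, U_l)` of subsets of
`X` to the free unary relation symbols in `Rbar` (normalized to `∅` outside
`Rbar`). -/
def ValidAssign (Rbar X : Finset ℕ) (U : ℕ → Finset ℕ) : Prop :=
  (∀ R ∈ Rbar, U R ⊆ X) ∧ ∀ R ∉ Rbar, U R = ∅

/-- `W` matches `U` on the bag `Xi` (componentwise). -/
def Matches (Rbar Xi : Finset ℕ) (W U : ℕ → Finset ℕ) : Prop :=
  ∀ R ∈ Rbar, W R ∩ Xi = U R

/-- The reduced extended model checking game of the `τ`-expansion of `B`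
by the assignment `W`. -/
noncomputable def RED (φ : MSO) (Rbar : Finset ℕ) (B : Struc) (Xi : Finset ℕ)
    (W : ℕ → Finset ℕ) : Game EPos :=
  reduce (EMC φ (B.addRels Rbar W) Xi)

/-- The value `valᵢ(ℛ)` should be the minimum of `Σ αₖ |R_k^{𝔄ᵢ'} ∖ Xᵢ|` over
the matching expansions equivalent to `ℛ`; this is the summand for one `W`. -/
def cost (α : ℕ → ℤ) (Rbar : Finset ℕ) (X : Finset ℕ) (W : ℕ → Finset ℕ) : ℤ :=
  ∑ R ∈ Rbar, α R * (((W R) \ X).card : ℤ)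

/-- Invariant 12 at a node with substructure `Ai` and bag `Xi`, for the
table `S` and values `val`. -/
def Invariant (φ : MSO) (α : ℕ → ℤ) (Rbar : Finset ℕ) (Ai : Struc) (Xi : Finset ℕ)
    (S : (ℕ → Finset ℕ) → Set (Game EPos)) (val : Game EPos → WithTop ℤ) : Prop :=
  ∀ U, ValidAssign Rbar Xi U →
    ((∀ W, ValidAssign Rbar Ai.univ W → Matches Rbar Xi W U →
        RED φ Rbar Ai Xi W ≠ Game.bot →
        ∃! G, G ∈ S U ∧ GEquivE G (RED φ Rbar Ai Xi W)) ∧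
     (∀ G ∈ S U, G ≠ Game.bot ∧
        ∃ W, ValidAssign Rbar Ai.univ W ∧ Matches Rbar Xi W U ∧
          GEquivE (RED φ Rbar Ai Xi W) G) ∧
     (∀ G ∈ S U, IsMinZ (val G)
        {v : ℤ | ∃ W, ValidAssign Rbar Ai.univ W ∧ Matches Rbar Xi W U ∧
           GEquivE (RED φ Rbar Ai Xi W) G ∧ RED φ Rbar Ai Xi W ≠ Game.bot ∧
           v = cost α Rbar Xi W}))

end MSOG

namespace MSOG

attribute [local instance] Classical.propDecidable

/-! ### Auxiliary lemmas for statement 7 -/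

lemma eval_node_falsifier_top_iff {P : Type} (p : P) (s : List (Game P)) :
    Game.eval (Game.node p (some .falsifier) s) = Game.top ↔
      ∀ g ∈ s, Game.eval g = Game.top := by
  rw [Game.eval]
  simp only [List.attach_map_val]
  by_cases h : ∀ g ∈ s.map Game.eval, g = Game.top
  · rw [if_pos h]
    simp only [List.mem_map, forall_exists_index] at h
    exact ⟨fun _ g hg => h _ g ⟨hg, rfl⟩, fun _ => rfl⟩
  · rw [if_neg h]
    have h2 : ¬ ∀ g ∈ s, Game.eval g = Game.top := by
      intro h2; exact h (by simpa using fun g hg => h2 g hg)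
    split <;> simp [h2]

lemma eval_node_falsifier_bot_iff {P : Type} (p : P) (s : List (Game P)) :
    Game.eval (Game.node p (some .falsifier) s) = Game.bot ↔
      ∃ g ∈ s, Game.eval g = Game.bot := by
  rw [Game.eval]
  simp only [List.attach_map_val]
  by_cases h : ∀ g ∈ s.map Game.eval, g = Game.top
  · rw [if_pos h]
    simp only [List.mem_map, forall_exists_index] at h
    constructor
    · intro hh; exact absurd hh (by simp)
    · rintro ⟨g, hg, hb⟩
      have := h _ g ⟨hg, rfl⟩
      rw [hb] at this; exact absurd this (by simp)
  · rw [if_neg h]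
    by_cases hb : Game.bot ∈ s.map Game.eval
    · rw [if_pos hb]
      simp only [List.mem_map] at hb
      obtain ⟨g, hg, hgb⟩ := hb
      exact ⟨fun _ => ⟨g, hg, hgb⟩, fun _ => rfl⟩
    · rw [if_neg hb]
      simp only [List.mem_map] at hb
      push_neg at hb
      constructor
      · intro hh; exact absurd hh (by simp)
      · rintro ⟨g, hg, hgb⟩; exact absurd hgb (hb _ hg)

lemma eval_node_verifier_bot_iff {P : Type} (p : P) (s : List (Game P)) :
    Game.eval (Game.node p (some .verifier) s) = Game.bot ↔
      ∀ g ∈ s, Game.eval g = Game.bot := by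
  rw [Game.eval]
  simp only [List.attach_map_val]
  by_cases h : ∀ g ∈ s.map Game.eval, g = Game.bot
  · rw [if_pos h]
    simp only [List.mem_map, forall_exists_index] at h
    exact ⟨fun _ g hg => h _ g ⟨hg, rfl⟩, fun _ => rfl⟩
  · rw [if_neg h]
    have h2 : ¬ ∀ g ∈ s, Game.eval g = Game.bot := by
      intro h2; exact h (by simpa using fun g hg => h2 g hg)
    split <;> simp [h2]

lemma eval_node_verifier_top_iff {P : Type} (p : P) (s : List (Game P)) :
    Game.eval (Game.node p (some .verifier) s) = Game.top ↔
      ∃ g ∈ s, Game.eval g = Game.top := by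
  rw [Game.eval]
  simp only [List.attach_map_val]
  by_cases h : ∀ g ∈ s.map Game.eval, g = Game.bot
  · rw [if_pos h]
    simp only [List.mem_map, forall_exists_index] at h
    constructor
    · intro hh; exact absurd hh (by simp)
    · rintro ⟨g, hg, hb⟩
      have := h _ g ⟨hg, rfl⟩
      rw [hb] at this; exact absurd this (by simp)
  · rw [if_neg h]
    by_cases hb : Game.top ∈ s.map Game.eval
    · rw [if_pos hb]
      simp only [List.mem_map] at hb
      obtain ⟨g, hg, hgb⟩ := hb
      exact ⟨fun _ => ⟨g, hg, hgb⟩, fun _ => rfl⟩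
    · rw [if_neg hb]
      simp only [List.mem_map] at hb
      push_neg at hb
      constructor
      · intro hh; exact absurd hh (by simp)
      · rintro ⟨g, hg, hgb⟩; exact absurd hgb (hb _ hg)

lemma dedupEquiv_eq_nil_iff (l : List (Game EPos)) : dedupEquiv l = [] ↔ l = [] := by
  induction l with
  | nil => simp [dedupEquiv]
  | cons g gs ih =>
    rw [dedupEquiv]
    constructor
    · intro h
      split at h
      · next hc =>
        rw [h] at hc
        simp at hc
      · exact absurd h (by simp)
    · intro h; exact absurd h (by simp)

lemma reduce_node_not_atomic (p : EPos) (o : Option Player) (s : List (Game EPos))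
    (hna : ¬ p.2.2.IsAtomic) :
    reduce (Game.node p o s) =
      if p.2.2.IsUniversal ∧ Game.bot ∈ s.map reduce then Game.bot
      else if p.2.2.IsExistential ∧ Game.top ∈ s.map reduce then Game.top
      else if dedupEquiv ((s.map reduce).filter fun g =>
          decide (g ≠ Game.top ∧ g ≠ Game.bot)) = [] then
        Game.eval (Game.node p o ([] : List (Game EPos)))
      else Game.node p o (dedupEquiv ((s.map reduce).filter fun g =>
          decide (g ≠ Game.top ∧ g ≠ Game.bot))) := by
  rw [reduce]
  simp only [if_neg hna, List.attach_map_val]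

lemma reduce_univ_iff (p : EPos) (s : List (Game EPos))
    (hna : ¬ p.2.2.IsAtomic) (hu : p.2.2.IsUniversal) (hne : ¬ p.2.2.IsExistential) :
    (reduce (Game.node p (some .falsifier) s) = Game.top ↔
      ∀ g ∈ s, reduce g = Game.top) ∧
    (reduce (Game.node p (some .falsifier) s) = Game.bot ↔
      ∃ g ∈ s, reduce g = Game.bot) := by
  rw [reduce_node_not_atomic p _ s hna]
  by_cases hb : Game.bot ∈ s.map reduce
  · rw [if_pos ⟨hu, hb⟩]
    simp only [List.mem_map] at hb
    obtain ⟨g, hg, hgb⟩ := hb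
    constructor
    · constructor
      · intro hh; exact absurd hh (by simp)
      · intro hall
        have := hall g hg
        rw [hgb] at this; exact absurd this (by simp)
    · exact ⟨fun _ => ⟨g, hg, hgb⟩, fun _ => rfl⟩
  · rw [if_neg (fun hc => hb hc.2), if_neg (fun hc => hne hc.1)]
    simp only [List.mem_map] at hb
    push_neg at hb
    by_cases hk : dedupEquiv ((s.map reduce).filter fun g =>
        decide (g ≠ Game.top ∧ g ≠ Game.bot)) = []
    · rw [if_pos hk]
      rw [dedupEquiv_eq_nil_iff, List.filter_eq_nil_iff] at hk
      have hall : ∀ g ∈ s, reduce g = Game.top := by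
        intro g hg
        have := hk (reduce g) (List.mem_map.mpr ⟨g, hg, rfl⟩)
        simp only [decide_eq_true_eq, not_and, not_not] at this
        by_cases ht : reduce g = Game.top
        · exact ht
        · exact absurd (this ht) (hb g hg)
      have het : Game.eval (Game.node p (some .falsifier) ([] : List (Game EPos)))
          = Game.top := by
        rw [eval_node_falsifier_top_iff]; simp
      rw [het]
      constructor
      · exact ⟨fun _ => hall, fun _ => rfl⟩
      · constructor
        · intro hh; exact absurd hh (by simp)
        · rintro ⟨g, hg, hgb⟩; exact absurd hgb (hb g hg)
    · rw [if_neg hk]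
      rw [dedupEquiv_eq_nil_iff, List.filter_eq_nil_iff] at hk
      push_neg at hk
      obtain ⟨g, hgmem, hgp⟩ := hk
      simp only [decide_eq_true_eq, not_not, Decidable.not_not] at hgp
      obtain ⟨g0, hg0, hg0e⟩ := List.mem_map.mp hgmem
      constructor
      · constructor
        · intro hh; exact absurd hh (by simp)
        · intro hall
          have := hall g0 hg0
          rw [this] at hg0e
          exact (hgp.1 hg0e.symm).elim
      · constructor
        · intro hh; exact absurd hh (by simp)
        · rintro ⟨g1, hg1, hgb⟩; exact absurd hgb (hb g1 hg1)

lemma reduce_ex_iff (p : EPos) (s : List (Game EPos))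
    (hna : ¬ p.2.2.IsAtomic) (hu : ¬ p.2.2.IsUniversal) (hne : p.2.2.IsExistential) :
    (reduce (Game.node p (some .verifier) s) = Game.bot ↔
      ∀ g ∈ s, reduce g = Game.bot) ∧
    (reduce (Game.node p (some .verifier) s) = Game.top ↔
      ∃ g ∈ s, reduce g = Game.top) := by
  rw [reduce_node_not_atomic p _ s hna]
  rw [if_neg (fun hc => hu hc.1)]
  by_cases hb : Game.top ∈ s.map reduce
  · rw [if_pos ⟨hne, hb⟩]
    simp only [List.mem_map] at hb
    obtain ⟨g, hg, hgb⟩ := hb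
    constructor
    · constructor
      · intro hh; exact absurd hh (by simp)
      · intro hall
        have := hall g hg
        rw [hgb] at this; exact absurd this (by simp)
    · exact ⟨fun _ => ⟨g, hg, hgb⟩, fun _ => rfl⟩
  · rw [if_neg (fun hc => hb hc.2)]
    simp only [List.mem_map] at hb
    push_neg at hb
    by_cases hk : dedupEquiv ((s.map reduce).filter fun g =>
        decide (g ≠ Game.top ∧ g ≠ Game.bot)) = []
    · rw [if_pos hk]
      rw [dedupEquiv_eq_nil_iff, List.filter_eq_nil_iff] at hk
      have hall : ∀ g ∈ s, reduce g = Game.bot := by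
        intro g hg
        have := hk (reduce g) (List.mem_map.mpr ⟨g, hg, rfl⟩)
        simp only [decide_eq_true_eq, not_and, not_not] at this
        by_cases ht : reduce g = Game.top
        · exact absurd ht (hb g hg)
        · exact this ht
      have het : Game.eval (Game.node p (some .verifier) ([] : List (Game EPos)))
          = Game.bot := by
        rw [eval_node_verifier_bot_iff]; simp
      rw [het]
      constructor
      · exact ⟨fun _ => hall, fun _ => rfl⟩
      · constructor
        · intro hh; exact absurd hh (by simp)
        · rintro ⟨g, hg, hgb⟩; exact absurd hgb (hb g hg)
    · rw [if_neg hk]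
      rw [dedupEquiv_eq_nil_iff, List.filter_eq_nil_iff] at hk
      push_neg at hk
      obtain ⟨g, hgmem, hgp⟩ := hk
      simp only [decide_eq_true_eq, not_not, Decidable.not_not] at hgp
      obtain ⟨g0, hg0, hg0e⟩ := List.mem_map.mp hgmem
      constructor
      · constructor
        · intro hh; exact absurd hh (by simp)
        · intro hall
          have := hall g0 hg0
          rw [this] at hg0e
          exact (hgp.2 hg0e.symm).elim
      · constructor
        · intro hh; exact absurd hh (by simp)
        · rintro ⟨g1, hg1, hgb⟩; exact absurd hgb (hb g1 hg1)

lemma key_univ (p : EPos) (s : List (Game EPos))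
    (hna : ¬ p.2.2.IsAtomic) (hu : p.2.2.IsUniversal) (hne : ¬ p.2.2.IsExistential)
    (ih : ∀ g ∈ s, (Game.eval g = Game.top ↔ reduce g = Game.top) ∧
        (Game.eval g = Game.bot ↔ reduce g = Game.bot)) :
    (Game.eval (Game.node p (some .falsifier) s) = Game.top ↔
      reduce (Game.node p (some .falsifier) s) = Game.top) ∧
    (Game.eval (Game.node p (some .falsifier) s) = Game.bot ↔
      reduce (Game.node p (some .falsifier) s) = Game.bot) := by
  obtain ⟨ht, hbt⟩ := reduce_univ_iff p s hna hu hne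
  rw [eval_node_falsifier_top_iff, eval_node_falsifier_bot_iff, ht, hbt]
  constructor
  · exact forall₂_congr fun g hg => (ih g hg).1
  · exact exists_congr fun g => and_congr_right fun hg => (ih g hg).2

lemma key_ex (p : EPos) (s : List (Game EPos))
    (hna : ¬ p.2.2.IsAtomic) (hu : ¬ p.2.2.IsUniversal) (hne : p.2.2.IsExistential)
    (ih : ∀ g ∈ s, (Game.eval g = Game.top ↔ reduce g = Game.top) ∧
        (Game.eval g = Game.bot ↔ reduce g = Game.bot)) :
    (Game.eval (Game.node p (some .verifier) s) = Game.top ↔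
      reduce (Game.node p (some .verifier) s) = Game.top) ∧
    (Game.eval (Game.node p (some .verifier) s) = Game.bot ↔
      reduce (Game.node p (some .verifier) s) = Game.bot) := by
  obtain ⟨hbt, ht⟩ := reduce_ex_iff p s hna hu hne
  rw [eval_node_verifier_top_iff, eval_node_verifier_bot_iff, ht, hbt]
  constructor
  · exact exists_congr fun g => and_congr_right fun hg => (ih g hg).1
  · exact forall₂_congr fun g hg => (ih g hg).2

lemma key_emc (φ : MSO) : ∀ (A : Struc) (X : Finset ℕ),
    (Game.eval (EMC φ A X) = Game.top ↔ reduce (EMC φ A X) = Game.top) ∧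
    (Game.eval (EMC φ A X) = Game.bot ↔ reduce (EMC φ A X) = Game.bot) := by
  induction φ with
  | atom R cs =>
    intro A X
    rw [EMC, reduce]
    have hat : ((A.restrict (X ∪ A.nulValues), X, MSO.atom R cs) : EPos).2.2.IsAtomic :=
      trivial
    rw [if_pos hat]
    exact ⟨Iff.rfl, Iff.rfl⟩
  | natom R cs =>
    intro A X
    rw [EMC, reduce]
    have hat : ((A.restrict (X ∪ A.nulValues), X, MSO.natom R cs) : EPos).2.2.IsAtomic :=
      trivial
    rw [if_pos hat]
    exact ⟨Iff.rfl, Iff.rfl⟩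
  | conj φ ψ ihφ ihψ =>
    intro A X
    rw [EMC]
    refine key_univ _ _ (fun h => h) trivial (fun h => h) ?_
    intro g hg
    simp only [List.mem_cons, List.mem_singleton, List.not_mem_nil, or_false] at hg
    rcases hg with rfl | rfl
    · exact ihφ A X
    · exact ihψ A X
  | disj φ ψ ihφ ihψ =>
    intro A X
    rw [EMC]
    refine key_ex _ _ (fun h => h) (fun h => h) trivial ?_
    intro g hg
    simp only [List.mem_cons, List.mem_singleton, List.not_mem_nil, or_false] at hg
    rcases hg with rfl | rfl
    · exact ihφ A X
    · exact ihψ A X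
  | fall c φ ihφ =>
    intro A X
    rw [EMC]
    refine key_univ _ _ (fun h => h) trivial (fun h => h) ?_
    intro g hg
    obtain ⟨u, _, rfl⟩ := List.mem_map.mp hg
    exact ihφ _ X
  | fex c φ ihφ =>
    intro A X
    rw [EMC]
    refine key_ex _ _ (fun h => h) (fun h => h) trivial ?_
    intro g hg
    obtain ⟨u, _, rfl⟩ := List.mem_map.mp hg
    exact ihφ _ X
  | sall R φ ihφ =>
    intro A X
    rw [EMC]
    refine key_univ _ _ (fun h => h) trivial (fun h => h) ?_
    intro g hg
    obtain ⟨U, _, rfl⟩ := List.mem_map.mp hg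
    exact ihφ _ X
  | sex R φ ihφ =>
    intro A X
    rw [EMC]
    refine key_ex _ _ (fun h => h) (fun h => h) trivial ?_
    intro g hg
    obtain ⟨U, _, rfl⟩ := List.mem_map.mp hg
    exact ihφ _ X

/-- for `𝒢 = EMC(𝔄, X, φ)`: `eval(𝒢) = ⊤ ↔ reduce(𝒢) = ⊤` and
`eval(𝒢) = ⊥ ↔ reduce(𝒢) = ⊥`. -/
theorem statement_7 (ar : ℕ → ℕ) (τ : Vocab) (A : Struc) (X : Finset ℕ) (φ : MSO)
    (harity : ∀ R ∈ τ.rels, 1 ≤ ar R)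
    (hA : A.WF ar) (hvoc : A.voc = τ) (hX : X ⊆ A.univ) (hφ : MSO.wf ar τ φ) :
    (Game.eval (EMC φ A X) = Game.top ↔ reduce (EMC φ A X) = Game.top) ∧
    (Game.eval (EMC φ A X) = Game.bot ↔ reduce (EMC φ A X) = Game.bot) := by
  exact key_emc φ A X

end MSOG
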